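/- arXiv:1109.1592 — 2 statements merged into one kernel-verified Lean document; each statement's English description precedes it below -/
import Mathlib

section
/- For each m ≥ 1, let G_m be the complement of the disjoint union of two copies of the complete bipartite graph K_{m,m} (a graph on 4m vertices). Then I(H_paw; G_m)/binom(4m,4) tends to 3/8 as m → ∞. -/
open MeasureTheory Finset Filter Topology
open scoped Classical

/-- The paw graph: triangle on `0,1,2` plus pendant edge `{2,3}`. -/
def paw : SimpleGraph (Fin 4) where
  Adj u v := (u = 0 ∧ v = 1) ∨ (u = 1 ∧ v = 0) ∨ (u = 0 ∧ v = 2) ∨ (u = 2 ∧ v = 0) ∨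
             (u = 1 ∧ v = 2) ∨ (u = 2 ∧ v = 1) ∨ (u = 2 ∧ v = 3) ∨ (u = 3 ∧ v = 2)
  symm := by constructor; decide
  loopless := by constructor; decide

/-- `I(H;G)`: the number of `|V(H)|`-element subsets `S` of `V(G)` such that the
subgraph of `G` induced on `S` is isomorphic to `H`. -/
noncomputable def numInduced {α β : Type*} [Fintype α] [Fintype β] [DecidableEq β]
    (H : SimpleGraph α) (G : SimpleGraph β) : ℕ :=
  (Finset.univ.filter fun S : Finset β =>
    S.card = Fintype.card α ∧ Nonempty (H ≃g G.induce (S : Set β))).card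

/-!
Write a vertex of the complement of two disjoint copies of `K_{m,m}` as (copy, side, index): two
distinct vertices are adjacent iff they lie in different copies or on the same side. The two
non-edges `03`, `13` of the paw force the vertices `0, 1` onto one side of a copy and the pendant
vertex `3` onto the other side of the same copy, and the apex `2`, adjacent to both `0` and `3`,
into the other copy. Conversely every such configuration induces a paw, so
`I(paw; G_m) = 4 · C(m,2) · m · 2m ~ 4m⁴`, while `C(4m,4) ~ (4m)⁴/24 = 32m⁴/3`.
-/

open SimpleGraph

lemma numInduced_le_of_iso {α β γ : Type*} [Fintype α] [Fintype β] [Fintype γ]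
    [DecidableEq β] [DecidableEq γ] (H : SimpleGraph α) {G : SimpleGraph β}
    {G' : SimpleGraph γ} (e : G ≃g G') : numInduced H G ≤ numInduced H G' := by
  refine Finset.card_le_card_of_injOn (fun S => S.map e.toEquiv.toEmbedding) ?_
    (Finset.map_injective _).injOn
  intro S hS
  simp only [coe_filter, Set.mem_ofPred_eq, mem_univ, true_and] at hS ⊢
  obtain ⟨hcard, ⟨f⟩⟩ := hS
  have hbij : Set.BijOn e (S : Set β) (S.map e.toEquiv.toEmbedding : Set γ) := by
    rw [coe_map]
    exact e.injective.injOn.bijOn_image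
  exact ⟨by rw [card_map, hcard], ⟨(e.induce hbij).comp f⟩⟩

lemma numInduced_congr_right {α β γ : Type*} [Fintype α] [Fintype β] [Fintype γ]
    [DecidableEq β] [DecidableEq γ] (H : SimpleGraph α) {G : SimpleGraph β}
    {G' : SimpleGraph γ} (e : G ≃g G') : numInduced H G = numInduced H G' :=
  (numInduced_le_of_iso H e).antisymm (numInduced_le_of_iso H e.symm)

lemma card_eq_and_nonempty_iso_induce_iff {α β : Type*} [Fintype α] [Fintype β]
    {H : SimpleGraph α} {G : SimpleGraph β} {S : Finset β} :
    S.card = Fintype.card α ∧ Nonempty (H ≃g G.induce (S : Set β)) ↔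
      ∃ e : H ↪g G, (S : Set β) = Set.range e := by
  constructor
  · rintro ⟨-, ⟨f⟩⟩
    refine ⟨(Embedding.induce _).comp f.toEmbedding, Set.ext fun v => ⟨fun hv => ?_, ?_⟩⟩
    · exact ⟨f.symm ⟨v, hv⟩, by simp⟩
    · rintro ⟨x, rfl⟩
      exact (f x).2
  · rintro ⟨e, he⟩
    refine ⟨?_, ⟨he ▸ e.isoInduceRange⟩⟩
    rw [← Set.ncard_coe_finset, he, Set.ncard_range_of_injective e.injective,
      Nat.card_eq_fintype_card]

def twoBicliqueCompl (α : Type*) : SimpleGraph (Bool × Bool × α) where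
  Adj x y := x ≠ y ∧ (x.1 ≠ y.1 ∨ x.2.1 = y.2.1)
  symm := ⟨fun _ _ h => ⟨h.1.symm, h.2.imp Ne.symm Eq.symm⟩⟩
  loopless := ⟨fun _ h => h.1 rfl⟩

def complSumCompleteBipartiteIso (α : Type*) :
    (completeBipartiteGraph α α ⊕g completeBipartiteGraph α α)ᶜ ≃g twoBicliqueCompl α where
  toEquiv := ((Equiv.boolProdEquivSum α).sumCongr (Equiv.boolProdEquivSum α)).symm.trans
    (Equiv.boolProdEquivSum _).symm
  map_rel_iff' {x y} := by
    rcases x with ((a | a) | (a | a)) <;> rcases y with ((b | b) | (b | b)) <;>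
      simp [twoBicliqueCompl, Equiv.boolProdEquivSum]

section
variable {α : Type*}

@[simp] lemma twoBicliqueCompl_adj {x y : Bool × Bool × α} :
    (twoBicliqueCompl α).Adj x y ↔ x ≠ y ∧ (x.1 ≠ y.1 ∨ x.2.1 = y.2.1) := Iff.rfl

def pawVertices (c s : Bool) (i j k : α) (q : Bool × α) : Fin 4 → Bool × Bool × α :=
  ![(c, s, i), (c, s, j), (!c, q), (c, !s, k)]

def pawEmbedding (c s : Bool) {i j : α} (k : α) (q : Bool × α) (hij : i ≠ j) :
    paw ↪g twoBicliqueCompl α where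
  toFun := pawVertices c s i j k q
  inj' x y hxy := by
    fin_cases x <;> fin_cases y <;> simp_all [pawVertices, Prod.ext_iff]
  map_rel_iff' {x y} := by
    fin_cases x <;> fin_cases y <;> simp [pawVertices, paw, hij, Ne.symm hij, Prod.ext_iff]

lemma twoBicliqueCompl_not_adj_iff {x y : Bool × Bool × α} (hxy : x ≠ y) :
    ¬(twoBicliqueCompl α).Adj x y ↔ x.1 = y.1 ∧ x.2.1 ≠ y.2.1 := by
  simp [hxy]

lemma exists_eq_pawVertices (e : paw ↪g twoBicliqueCompl α) :
    ∃ c s i j k q, i ≠ j ∧ ⇑e = pawVertices c s i j k q := by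
  have adj (x y : Fin 4) : (twoBicliqueCompl α).Adj (e x) (e y) ↔ paw.Adj x y := e.map_adj_iff
  have nonadj {x y : Fin 4} (hxy : x ≠ y) (h : ¬paw.Adj x y) :=
    (twoBicliqueCompl_not_adj_iff (e.injective.ne hxy)).1 ((adj x y).not.2 h)
  obtain ⟨hc03, hs03⟩ := nonadj (x := 0) (y := 3) (by decide) (by simp [paw])
  obtain ⟨hc13, hs13⟩ := nonadj (x := 1) (y := 3) (by decide) (by simp [paw])
  have h20 := ((adj 2 0).2 (by simp [paw])).2
  have h23 := ((adj 2 3).2 (by simp [paw])).2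
  have hs3 : (e 3).2.1 = !(e 0).2.1 := by rw [Bool.eq_not]; exact hs03.symm
  have hs1 : (e 1).2.1 = (e 0).2.1 := by simpa [hs3] using hs13
  have hc2 : (e 2).1 = !(e 0).1 := by
    rw [Bool.eq_not]
    intro hc
    rcases h20 with h20 | h20
    · exact h20 hc
    · rcases h23 with h23 | h23
      · exact h23 (hc.trans hc03)
      · exact Bool.self_ne_not _ (h20.symm.trans (h23.trans hs3))
  refine ⟨(e 0).1, (e 0).2.1, (e 0).2.2, (e 1).2.2, (e 3).2.2, (e 2).2, ?_, ?_⟩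
  · intro hij
    exact e.injective.ne (show (0 : Fin 4) ≠ 1 by decide)
      (Prod.ext (hc03.trans hc13.symm) (Prod.ext hs1.symm hij))
  · funext x
    fin_cases x <;> simp [pawVertices, Prod.ext_iff, hc03, hc13, hs1, hs3, hc2]

lemma range_pawVertices (c s : Bool) (i j k : α) (q : Bool × α) :
    Set.range (pawVertices c s i j k q) = {(c, s, i), (c, s, j), (!c, q), (c, !s, k)} := by
  simp only [pawVertices, Matrix.range_cons, Matrix.range_empty, Set.union_empty,
    Set.singleton_union]

lemma range_pawVertices_comm (c s : Bool) (i j k : α) (q : Bool × α) :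
    Set.range (pawVertices c s i j k q) = Set.range (pawVertices c s j i k q) := by
  rw [range_pawVertices, range_pawVertices, Set.insert_comm]

lemma eq_of_range_pawVertices_eq [LinearOrder α] {c s c' s' : Bool} {i j k i' j' k' : α}
    {q q' : Bool × α} (hij : i < j) (hij' : i' < j')
    (h : Set.range (pawVertices c s i j k q) = Set.range (pawVertices c' s' i' j' k' q')) :
    c = c' ∧ s = s' ∧ i = i' ∧ j = j' ∧ k = k' ∧ q = q' := by
  simp only [range_pawVertices, Set.ext_iff, Set.mem_insert_iff, Set.mem_singleton_iff] at h
  have h0 := (h (c, s, i)).1 (by simp)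
  have h1 := (h (c, s, j)).1 (by simp)
  have h2 := (h (!c, q)).1 (by simp)
  have h3 := (h (c, !s, k)).1 (by simp)
  simp only [Prod.ext_iff] at h0 h1 h2 h3
  clear h
  cases c <;> cases c' <;> cases s <;> cases s' <;> grind

variable [Fintype α] [LinearOrder α]

-- `i < j` picks one of the two labellings exchanged by the automorphism `0 ↔ 1` of the paw.
variable (α) in
def pawParams : Finset (Bool × Bool × (α × α) × α × (Bool × α)) :=
  univ ×ˢ univ ×ˢ ({p | p.1 < p.2} : Finset (α × α)) ×ˢ univ ×ˢ univ

def pawSet : Bool × Bool × (α × α) × α × (Bool × α) → Finset (Bool × Bool × α)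
  | (c, s, (i, j), k, q) => univ.image (pawVertices c s i j k q)

lemma filter_paw_eq_image_pawSet :
    (univ.filter fun S : Finset (Bool × Bool × α) => S.card = Fintype.card (Fin 4) ∧
      Nonempty (paw ≃g (twoBicliqueCompl α).induce (S : Set _))) = (pawParams α).image pawSet := by
  ext S
  simp only [mem_filter, mem_univ, true_and, card_eq_and_nonempty_iso_induce_iff, mem_image,
    pawParams, mem_product, Prod.exists]
  constructor
  · rintro ⟨e, he⟩
    obtain ⟨c, s, i, j, k, q, hij, he'⟩ := exists_eq_pawVertices e
    rcases hij.lt_or_gt with hlt | hlt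
    · exact ⟨c, s, i, j, k, q.1, q.2, by simpa using hlt, by
        rw [← coe_inj, pawSet, coe_image, coe_univ, Set.image_univ, he, he']⟩
    · exact ⟨c, s, j, i, k, q.1, q.2, by simpa using hlt, by
        rw [← coe_inj, pawSet, coe_image, coe_univ, Set.image_univ, he, he',
          range_pawVertices_comm]⟩
  · rintro ⟨c, s, i, j, k, h, l, ⟨hij, -⟩, rfl⟩
    exact ⟨pawEmbedding c s k (h, l) hij.ne, by
      simp only [pawSet, coe_image, coe_univ, Set.image_univ]
      rfl⟩

lemma numInduced_paw_twoBicliqueCompl :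
    numInduced paw (twoBicliqueCompl α) =
      2 * 2 * (Fintype.card α).choose 2 * Fintype.card α * (2 * Fintype.card α) := by
  rw [numInduced, filter_paw_eq_image_pawSet, card_image_of_injOn]
  · simp only [pawParams, card_product, card_univ, Fintype.card_bool, Fintype.card_prod,
      Fintype.card_product_filter_lt]
    ring
  · rintro ⟨c, s, ⟨i, j⟩, k, q⟩ hp ⟨c', s', ⟨i', j'⟩, k', q'⟩ hp' h
    simp only [pawParams, coe_product, Set.mem_prod, coe_filter, mem_univ, true_and,
      Set.mem_ofPred_eq] at hp hp'
    simp only [pawSet, ← coe_inj, coe_image, coe_univ, Set.image_univ] at h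
    obtain ⟨rfl, rfl, rfl, rfl, rfl, rfl⟩ :=
      eq_of_range_pawVertices_eq hp.2.2.1 hp'.2.2.1 h
    rfl
end

open Asymptotics in
lemma tendsto_paw_count_div_choose :
    Tendsto (fun m : ℕ => ((2 * 2 * m.choose 2 * m * (2 * m) : ℕ) : ℝ) / ((4 * m).choose 4 : ℕ))
      atTop (𝓝 (3 / 8)) := by
  have hnum : (fun m : ℕ => ((2 * 2 * m.choose 2 * m * (2 * m) : ℕ) : ℝ)) ~[atTop]
      fun m => 8 * ((m : ℝ) ^ 2 / 2) * m ^ 2 := by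
    refine (((IsEquivalent.refl (u := fun _ : ℕ => (8 : ℝ))).mul (isEquivalent_choose 2)).mul
      (IsEquivalent.refl (u := fun m : ℕ => (m : ℝ) ^ 2))).congr_left ?_
    filter_upwards with m
    simp only [Pi.mul_apply, Nat.cast_mul, Nat.cast_ofNat]
    ring
  have hden : (fun m : ℕ => ((4 * m).choose 4 : ℝ)) ~[atTop] fun m => (4 * m : ℝ) ^ 4 / 24 := by
    have := (isEquivalent_choose 4).comp_tendsto
      (tendsto_id.const_mul_atTop' four_pos : Tendsto (fun m : ℕ => 4 * m) atTop atTop)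
    simpa [Function.comp_def, Nat.factorial] using this
  refine (hnum.div hden).tendsto_nhds_iff.2 (tendsto_const_nhds.congr' ?_)
  filter_upwards [eventually_ne_atTop 0] with m hm
  simp only [Pi.div_apply]
  field_simp
  ring

/-- For `G_m` the complement of the disjoint union of two copies of
`K_{m,m}` (a graph on `4m` vertices), `I(H_paw; G_m)/binom(4m,4) → 3/8` as `m → ∞`. -/
theorem paw_density_in_complement_two_Kmm :
    Tendsto
      (fun m : ℕ =>
        (numInduced paw
            ((SimpleGraph.sum (completeBipartiteGraph (Fin m) (Fin m))
                (completeBipartiteGraph (Fin m) (Fin m)))ᶜ) : ℝ) /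
          ((4 * m).choose 4))
      atTop (𝓝 (3 / 8)) := by
  refine tendsto_paw_count_div_choose.congr fun m => ?_
  rw [numInduced_congr_right paw (complSumCompleteBipartiteIso (Fin m)),
    numInduced_paw_twoBicliqueCompl, Fintype.card_fin]
end

section
/- For every two finite simple graphs H and G with |V(G)| = n ≥ 1 and |V(H)| = k, one has |t(H;G) − t_inj(H;G)| ≤ (1/n)·binom(k,2). -/
/-!
`t_inj(H;G)` is the conditional probability that a uniformly random map is a homomorphism given
that it is injective, and for any two events `|P(E) - P(E | F)| ≤ P(Fᶜ)`. A map fails to be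
injective only if it identifies one of the `binom(k,2)` pairs of vertices of `H`, and each pair is
identified by a proportion `1/n` of all maps, so a union bound gives `P(Fᶜ) ≤ binom(k,2)/n`.
-/

open MeasureTheory Finset Filter Topology
open scoped Classical

/-- `t(H;G)`: the probability that a uniformly random map `V(H) → V(G)` is a
graph homomorphism. -/
noncomputable def tHom {k n : ℕ} (H : SimpleGraph (Fin k)) (G : SimpleGraph (Fin n)) : ℝ :=
  ((Finset.univ.filter fun f : Fin k → Fin n =>
      ∀ u v, H.Adj u v → G.Adj (f u) (f v)).card : ℝ) / (Fintype.card (Fin k → Fin n))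

/-- `t_inj(H;G)`: the probability that a uniformly random injective map `V(H) → V(G)`
is a graph homomorphism. -/
noncomputable def tInj {k n : ℕ} (H : SimpleGraph (Fin k)) (G : SimpleGraph (Fin n)) : ℝ :=
  ((Finset.univ.filter fun f : Fin k → Fin n =>
      Function.Injective f ∧ ∀ u v, H.Adj u v → G.Adj (f u) (f v)).card : ℝ) /
    ((Finset.univ.filter fun f : Fin k → Fin n => Function.Injective f).card : ℝ)

theorem abs_add_div_add_sub_div_le {a b i m : ℝ} (ha : 0 ≤ a) (hai : a ≤ i) (hb : 0 ≤ b)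
    (hbm : b ≤ m) : |(a + b) / (i + m) - a / i| ≤ m / (i + m) := by
  rcases (ha.trans hai).eq_or_lt with rfl | hi
  · obtain rfl : a = 0 := le_antisymm hai ha
    simpa [abs_of_nonneg (div_nonneg hb (hb.trans hbm))]
      using div_le_div_of_nonneg_right hbm (hb.trans hbm)
  · have him : 0 < i + m := by linarith
    have hdiff : (a + b) / (i + m) - a / i = (i * b - a * m) / (i * (i + m)) := by
      field_simp; ring
    have hbound : m / (i + m) = i * m / (i * (i + m)) := by
      rw [mul_div_mul_left _ _ hi.ne']
    rw [hdiff, hbound, abs_div, abs_of_pos (mul_pos hi him)]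
    refine div_le_div_of_nonneg_right (abs_le.2 ⟨?_, ?_⟩) (mul_pos hi him).le <;> nlinarith

theorem abs_card_filter_div_sub_card_filter_and_div_le {ι : Type*} [Fintype ι] (p q : ι → Prop)
    [DecidablePred p] [DecidablePred q] :
    |(#{x | p x} : ℝ) / Fintype.card ι - #{x | q x ∧ p x} / #{x | q x}|
      ≤ #{x | ¬ q x} / Fintype.card ι := by
  have hp : #{x | p x} = #{x | q x ∧ p x} + #{x | ¬ q x ∧ p x} := by
    rw [← card_filter_add_card_filter_not q (s := {x | p x}), filter_filter, filter_filter]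
    simp only [and_comm]
  have huniv : Fintype.card ι = #{x | q x} + #{x | ¬ q x} := by
    rw [card_filter_add_card_filter_not, card_univ]
  rw [hp, huniv]
  push_cast
  exact abs_add_div_add_sub_div_le (Nat.cast_nonneg _)
    (by exact_mod_cast card_le_card (monotone_filter_right _ fun _ _ => And.left))
    (Nat.cast_nonneg _)
    (by exact_mod_cast card_le_card (monotone_filter_right _ fun _ _ => And.left))

theorem card_filter_apply_eq_apply_mul_card_le {α β : Type*} [Fintype α] [DecidableEq α]
    [Fintype β] [DecidableEq β] {u v : α} (huv : u ≠ v) :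
    #{f : α → β | f u = f v} * Fintype.card β ≤ Fintype.card β ^ Fintype.card α := by
  rw [← Fintype.card_fun, ← card_univ, ← card_univ, ← card_product]
  refine card_le_card_of_injOn (fun fb => Function.update fb.1 v fb.2) (fun _ _ => mem_univ _) ?_
  rintro ⟨f, b⟩ hf ⟨g, c⟩ hg hfg
  simp only [coe_product, Set.mem_prod, mem_coe, mem_filter, mem_univ, true_and, and_true] at hf hg
  dsimp only at hfg
  have hbc : b = c := by simpa using congrFun hfg v
  refine Prod.ext (funext fun x => ?_) hbc
  dsimp only
  obtain rfl | hx := eq_or_ne x v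
  · rw [← hf, ← hg]
    simpa [Function.update_of_ne huv] using congrFun hfg u
  · simpa [Function.update_of_ne hx] using congrFun hfg x

theorem card_filter_not_injective_mul_card_le {α β : Type*} [Fintype α] [DecidableEq α]
    [Fintype β] [DecidableEq β] :
    #{f : α → β | ¬ Function.Injective f} * Fintype.card β
      ≤ (Fintype.card α).choose 2 * Fintype.card β ^ Fintype.card α := by
  have hcover : ({f : α → β | ¬ Function.Injective f} : Finset _)
      ⊆ ({z : Sym2 α | ¬ z.IsDiag} : Finset _).biUnion fun z => {f | (z.map f).IsDiag} := by
    intro f hf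
    simp only [Function.Injective, not_forall, mem_filter, mem_univ, true_and] at hf
    obtain ⟨a, b, hab, hne⟩ := hf
    exact mem_biUnion.2 ⟨s(a, b), by simpa using hne, by simpa using hab⟩
  have hpair : ∀ z : Sym2 α, ¬ z.IsDiag →
      #{f : α → β | (z.map f).IsDiag} * Fintype.card β ≤ Fintype.card β ^ Fintype.card α := by
    refine Sym2.ind fun u v huv => ?_
    simpa using card_filter_apply_eq_apply_mul_card_le (β := β) (by simpa using huv)
  calc #{f : α → β | ¬ Function.Injective f} * Fintype.card β
      ≤ (∑ z ∈ {z : Sym2 α | ¬ z.IsDiag}, #{f : α → β | (z.map f).IsDiag}) * Fintype.card β :=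
        Nat.mul_le_mul_right _ ((card_le_card hcover).trans card_biUnion_le)
    _ ≤ ∑ z ∈ {z : Sym2 α | ¬ z.IsDiag}, Fintype.card β ^ Fintype.card α := by
        rw [sum_mul]
        exact sum_le_sum fun z hz => hpair z (mem_filter.1 hz).2
    _ = (Fintype.card α).choose 2 * Fintype.card β ^ Fintype.card α := by
        rw [sum_const, smul_eq_mul, ← Sym2.card_subtype_not_diag, Fintype.card_subtype]

theorem abs_tHom_sub_tInj_le_general {k n : ℕ} (hn : 1 ≤ n)
    (H : SimpleGraph (Fin k)) (G : SimpleGraph (Fin n)) :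
    |tHom H G - tInj H G| ≤ (1 / n : ℝ) * (k.choose 2) := by
  have hcount := card_filter_not_injective_mul_card_le (α := Fin k) (β := Fin n)
  have hN : (0 : ℝ) < Fintype.card (Fin k → Fin n) := by
    have : Nonempty (Fin n) := ⟨⟨0, hn⟩⟩
    exact_mod_cast Fintype.card_pos
  calc |tHom H G - tInj H G|
      ≤ #{f : Fin k → Fin n | ¬ Function.Injective f} / (Fintype.card (Fin k → Fin n) : ℝ) :=
        abs_card_filter_div_sub_card_filter_and_div_le _ _
    _ ≤ (1 / n : ℝ) * (k.choose 2) := by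
        rw [div_le_iff₀ hN, one_div_mul_eq_div, div_mul_eq_mul_div,
          le_div_iff₀ (by exact_mod_cast hn)]
        simp only [Fintype.card_fin, Fintype.card_fun] at hcount ⊢
        exact_mod_cast hcount

/-- For graphs `H` on `k` vertices and `G` on `n ≥ 1` vertices
(with `k ≤ n`, so that `t_inj` is defined), `|t(H;G) - t_inj(H;G)| ≤ (1/n)·binom(k,2)`. -/
theorem abs_tHom_sub_tInj_le {k n : ℕ} (hn : 1 ≤ n) (hkn : k ≤ n)
    (H : SimpleGraph (Fin k)) (G : SimpleGraph (Fin n)) :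
    |tHom H G - tInj H G| ≤ (1 / n : ℝ) * (k.choose 2) :=
  abs_tHom_sub_tInj_le_general hn H G
end
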